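/- arXiv:2509.22576 — 2 statements merged into one kernel-verified Lean document; each statement's English description precedes it below -/
import Mathlib

section
/- Performance difference lemma (finite-horizon, deterministic initial state): for any two policies π and π' in a finite-horizon MDP with horizon H, and any initial state s₀, V^π(s₀) − V^{π'}(s₀) = E_{τ∼π}[ ∑_{t=0}^{H-1} A^{π'}_t(s_t, a_t) | s_0 = s₀ ], where A^{π'}_t(s,a) = Q^{π'}_t(s,a) − V^{π'}_t(s). -/
/-- Expected cumulative value of a per-step function `f (t, s, a)` over trajectories
generated by policy `π` under transition kernel `P`, with `n` steps remaining and
current absolute time `t`, starting from state `s`.  For `f = r` this is the value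
function `V^π_t(s)` with horizon `t + n`. -/
noncomputable def expSum {S A : Type*} [Fintype S] [Fintype A]
    (P : S → A → S → ℝ) (π : ℕ → S → A → ℝ) (f : ℕ → S → A → ℝ) :
    ℕ → ℕ → S → ℝ
  | 0, _, _ => 0
  | (n + 1), t, s =>
      ∑ a, π t s a * (f t s a + ∑ s', P s a s' * expSum P π f n (t + 1) s')

/-- Performance difference lemma (finite horizon, deterministic initial state):
for any two policies `π` and `π'`,
`V^π(s₀) − V^{π'}(s₀) = E_{τ∼π}[ ∑_{t<H} A^{π'}_t(s_t, a_t) ]`,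
where `A^{π'}_t(s,a) = Q^{π'}_t(s,a) − V^{π'}_t(s)` and
`Q^{π'}_t(s,a) = r(s,a) + E_{s'∼P(·|s,a)}[V^{π'}_{t+1}(s')]`.
The expectation on the right is expressed via the same trajectory-expectation
recursion `expSum`, applied to the advantage function of `π'`. -/
theorem performance_difference {S A : Type*} [Fintype S] [Fintype A]
    (H : ℕ) (r : S → A → ℝ) (P : S → A → S → ℝ)
    (π π' : ℕ → S → A → ℝ)
    (hP0 : ∀ s a s', 0 ≤ P s a s') (hP1 : ∀ s a, ∑ s', P s a s' = 1)
    (hπ0 : ∀ t s a, 0 ≤ π t s a) (hπ1 : ∀ t s, ∑ a, π t s a = 1)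
    (hπ'0 : ∀ t s a, 0 ≤ π' t s a) (hπ'1 : ∀ t s, ∑ a, π' t s a = 1)
    (s₀ : S)
    -- value function of π' at time t (horizon H): V^{π'}_t(s)
    (V' : ℕ → S → ℝ) (hV' : ∀ t s, V' t s = expSum P π' (fun _ s a => r s a) (H - t) t s)
    -- advantage of π' : A^{π'}_t(s,a) = Q^{π'}_t(s,a) − V^{π'}_t(s)
    (Adv : ℕ → S → A → ℝ)
    (hAdv : ∀ t s a,
      Adv t s a = (r s a + ∑ s', P s a s' * V' (t + 1) s') - V' t s) :
    expSum P π (fun _ s a => r s a) H 0 s₀ - expSum P π' (fun _ s a => r s a) H 0 s₀ =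
      expSum P π Adv H 0 s₀ := by
  suffices key : ∀ n t s, t + n = H →
      expSum P π (fun _ s a => r s a) n t s - expSum P π' (fun _ s a => r s a) n t s =
        expSum P π Adv n t s by
    exact key H 0 s₀ (by omega)
  intro n
  induction n with
  | zero => intro t s _; simp [expSum]
  | succ n ih =>
    intro t s ht
    have hVts : V' t s = expSum P π' (fun _ s a => r s a) (n + 1) t s := by
      rw [hV']; congr 1; omega
    have hVt1 : ∀ s', V' (t + 1) s' = expSum P π' (fun _ s a => r s a) n (t + 1) s' := by
      intro s'; rw [hV']; congr 1; omega
    have hmid : ∀ s', expSum P π Adv n (t + 1) s' =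
        expSum P π (fun _ s a => r s a) n (t + 1) s' -
          expSum P π' (fun _ s a => r s a) n (t + 1) s' := by
      intro s'; exact (ih (t + 1) s' (by omega)).symm
    have step : expSum P π Adv (n + 1) t s =
        (∑ a, π t s a *
          (r s a + ∑ s', P s a s' * expSum P π (fun _ s a => r s a) n (t + 1) s')) -
          V' t s := by
      show (∑ a, π t s a * (Adv t s a + ∑ s', P s a s' * expSum P π Adv n (t + 1) s')) = _
      have : ∀ a, π t s a * (Adv t s a + ∑ s', P s a s' * expSum P π Adv n (t + 1) s') =
          π t s a *
            (r s a + ∑ s', P s a s' * expSum P π (fun _ s a => r s a) n (t + 1) s') -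
            π t s a * V' t s := by
        intro a
        rw [hAdv]
        have h1 : (∑ s', P s a s' * expSum P π Adv n (t + 1) s') =
            (∑ s', P s a s' * expSum P π (fun _ s a => r s a) n (t + 1) s') -
              (∑ s', P s a s' * expSum P π' (fun _ s a => r s a) n (t + 1) s') := by
          rw [← Finset.sum_sub_distrib]
          exact Finset.sum_congr rfl fun s' _ => by rw [hmid s', mul_sub]
        have h2 : (∑ s', P s a s' * V' (t + 1) s') =
            (∑ s', P s a s' * expSum P π' (fun _ s a => r s a) n (t + 1) s') :=
          Finset.sum_congr rfl fun s' _ => by rw [hVt1 s']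
        rw [h1, h2]; ring
      rw [Finset.sum_congr rfl fun a _ => this a, Finset.sum_sub_distrib,
        ← Finset.sum_mul, hπ1, one_mul]
    rw [step, hVts]
    rfl
end

section
/- Pinsker-type quadratic bound for softmax parameterization: let π_θ(a) = exp(θ_a)/∑_{a'} exp(θ_{a'}) and π̄(a) = exp(Q(a)/λ)/∑_{a'} exp(Q(a')/λ) on a finite set A. Then D_KL(π_θ ‖ π̄) ≤ (1/(2λ²)) min_{c∈ℝ} ‖Q − λθ − c·1‖_∞², where 1 denotes the all-ones vector. -/
lemma softmax_key {A : Type*} [Fintype A] [Nonempty A] (θ x : A → ℝ) (M : ℝ)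
    (hM : ∀ a, |x a| ≤ M) :
    Real.log (∑ a, Real.exp (θ a + x a)) - Real.log (∑ a, Real.exp (θ a))
      - (∑ a, x a * Real.exp (θ a)) / (∑ a, Real.exp (θ a)) ≤ M ^ 2 / 2 := by
  set S : ℝ → ℝ := fun t => ∑ a, Real.exp (θ a + t * x a) with hSdef
  set T : ℝ → ℝ := fun t => ∑ a, x a * Real.exp (θ a + t * x a) with hTdef
  set U : ℝ → ℝ := fun t => ∑ a, x a * (x a * Real.exp (θ a + t * x a)) with hUdef
  have hSpos : ∀ t, 0 < S t := fun t =>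
    Finset.sum_pos (fun a _ => Real.exp_pos _) Finset.univ_nonempty
  have hS : ∀ t, HasDerivAt S (T t) t := by
    intro t
    have h : ∀ a ∈ Finset.univ (α := A),
        HasDerivAt (fun t => Real.exp (θ a + t * x a)) (x a * Real.exp (θ a + t * x a)) t := by
      intro a _
      have h1 : HasDerivAt (fun t : ℝ => θ a + t * x a) (x a) t :=
        (hasDerivAt_mul_const (x a)).const_add (θ a)
      simpa [mul_comm] using h1.exp
    simpa using HasDerivAt.fun_sum h
  have hT : ∀ t, HasDerivAt T (U t) t := by
    intro t
    have h : ∀ a ∈ Finset.univ (α := A),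
        HasDerivAt (fun t => x a * Real.exp (θ a + t * x a))
          (x a * (x a * Real.exp (θ a + t * x a))) t := by
      intro a _
      have h1 : HasDerivAt (fun t : ℝ => θ a + t * x a) (x a) t :=
        (hasDerivAt_mul_const (x a)).const_add (θ a)
      have := h1.exp.const_mul (x a)
      simpa [mul_comm, mul_assoc, mul_left_comm] using this
    simpa using HasDerivAt.fun_sum h
  set G : ℝ → ℝ := fun t => T t / S t with hGdef
  have hG : ∀ t, HasDerivAt G ((U t * S t - T t * T t) / (S t) ^ 2) t := by
    intro t
    exact (hT t).div (hS t) (hSpos t).ne'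
  have hG' : ∀ t, (U t * S t - T t * T t) / (S t) ^ 2 ≤ M ^ 2 := by
    intro t
    have hU : U t ≤ M ^ 2 * S t := by
      rw [hUdef, hSdef]
      simp only
      rw [Finset.mul_sum]
      apply Finset.sum_le_sum
      intro a _
      have h1 := abs_le.1 (hM a)
      have hx2 : x a * x a ≤ M ^ 2 := by nlinarith [h1.1, h1.2]
      have he := (Real.exp_pos (θ a + t * x a)).le
      calc x a * (x a * Real.exp (θ a + t * x a)) = (x a * x a) * Real.exp (θ a + t * x a) := by
            ring
        _ ≤ M ^ 2 * Real.exp (θ a + t * x a) := mul_le_mul_of_nonneg_right hx2 he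
    rw [div_le_iff₀ (by positivity)]
    nlinarith [sq_nonneg (T t), hSpos t]
  -- K is antitone
  set K : ℝ → ℝ := fun t => G t - M ^ 2 * t with hKdef
  have hK : ∀ t, HasDerivAt K ((U t * S t - T t * T t) / (S t) ^ 2 - M ^ 2) t := by
    intro t
    have := (hG t).fun_sub ((hasDerivAt_id t).const_mul (M ^ 2))
    simpa [hKdef, mul_comm] using this
  have hKanti : Antitone K :=
    antitone_of_hasDerivAt_nonpos hK (fun t => sub_nonpos.2 (hG' t))
  -- H
  set H : ℝ → ℝ := fun t => Real.log (S t) - t * G 0 - M ^ 2 * t ^ 2 / 2 with hHdef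
  have hH : ∀ t, HasDerivAt H (G t - G 0 - M ^ 2 * t) t := by
    intro t
    have h1 : HasDerivAt (fun t => Real.log (S t)) (G t) t := (hS t).log (hSpos t).ne'
    have h2 : HasDerivAt (fun t : ℝ => t * G 0) (G 0) t := hasDerivAt_mul_const (G 0)
    have h3 : HasDerivAt (fun t : ℝ => M ^ 2 * t ^ 2 / 2) (M ^ 2 * t) t := by
      have := ((hasDerivAt_pow 2 t).const_mul (M ^ 2)).div_const 2
      refine this.congr_deriv ?_
      push_cast
      ring
    exact (h1.sub h2).sub h3
  have hHanti : AntitoneOn H (Set.Ici (0 : ℝ)) := by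
    apply antitoneOn_of_hasDerivWithinAt_nonpos (convex_Ici 0)
      (fun t _ => (hH t).continuousAt.continuousWithinAt)
      (fun t _ => (hH t).hasDerivWithinAt)
    intro t ht
    rw [interior_Ici] at ht
    have h0 : K t ≤ K 0 := hKanti (le_of_lt ht)
    simp only [hKdef, mul_zero, sub_zero] at h0
    linarith
  have hfin : H 1 ≤ H 0 := hHanti (Set.self_mem_Ici) (Set.mem_Ici.2 zero_le_one) zero_le_one
  have e0 : H 0 = Real.log (∑ a, Real.exp (θ a)) := by
    simp [hHdef, hSdef]
  have e1 : H 1 = Real.log (∑ a, Real.exp (θ a + x a))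
      - (∑ a, x a * Real.exp (θ a)) / (∑ a, Real.exp (θ a)) - M ^ 2 / 2 := by
    simp only [hHdef, hGdef, hTdef, hSdef, one_mul, mul_one, one_pow, zero_mul, add_zero]
  rw [e0, e1] at hfin
  linarith

open Finset in
/-- Pinsker-type quadratic bound for the softmax parameterization:
with `π_θ = softmax(θ)` and `π̄ = softmax(Q/λ)` on a finite set `A`,
`D_KL(π_θ ‖ π̄) ≤ (1/(2λ²)) min_{c∈ℝ} ‖Q − λθ − c·1‖_∞²`
(equivalently, the bound holds for every centering constant `c`). -/
theorem kl_softmax_quadratic_bound {A : Type*} [Fintype A] [Nonempty A]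
    (θ Q : A → ℝ) (lam : ℝ) (hlam : 0 < lam)
    (πθ πbar : A → ℝ)
    (hπθ : ∀ a, πθ a = Real.exp (θ a) / ∑ a', Real.exp (θ a'))
    (hπbar : ∀ a, πbar a = Real.exp (Q a / lam) / ∑ a', Real.exp (Q a' / lam)) :
    ∀ c : ℝ,
      ∑ a, πθ a * Real.log (πθ a / πbar a) ≤
        (1 / (2 * lam ^ 2)) *
          (Finset.univ.sup' Finset.univ_nonempty (fun a => |Q a - lam * θ a - c|)) ^ 2 := by
  intro c
  set x : A → ℝ := fun a => (Q a - lam * θ a - c) / lam with hxdef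
  set m : ℝ := Finset.univ.sup' Finset.univ_nonempty (fun a => |Q a - lam * θ a - c|) with hmdef
  have hM : ∀ a, |x a| ≤ m / lam := by
    intro a
    rw [hxdef]
    rw [abs_div, abs_of_pos hlam]
    gcongr
    exact Finset.le_sup' (fun a => |Q a - lam * θ a - c|) (Finset.mem_univ a)
  set Zθ : ℝ := ∑ a, Real.exp (θ a) with hZθ
  set W : ℝ := ∑ a, Real.exp (θ a + x a) with hW
  set Zb : ℝ := ∑ a, Real.exp (Q a / lam) with hZb
  have hZθpos : 0 < Zθ := Finset.sum_pos (fun a _ => Real.exp_pos _) Finset.univ_nonempty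
  have hWpos : 0 < W := Finset.sum_pos (fun a _ => Real.exp_pos _) Finset.univ_nonempty
  have hQdecomp : ∀ a, Q a / lam = θ a + x a + c / lam := by
    intro a
    simp only [hxdef]
    rw [sub_div, sub_div, mul_div_cancel_left₀ _ hlam.ne']
    ring
  have hZbW : Zb = W * Real.exp (c / lam) := by
    rw [hZb, hW, Finset.sum_mul]
    refine Finset.sum_congr rfl fun a _ => ?_
    rw [hQdecomp a, Real.exp_add]
  have hlogZb : Real.log Zb = Real.log W + c / lam := by
    rw [hZbW, Real.log_mul hWpos.ne' (Real.exp_ne_zero _), Real.log_exp]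
  have hterm : ∀ a, πθ a * Real.log (πθ a / πbar a)
      = (Real.exp (θ a) / Zθ) * (-x a + (Real.log W - Real.log Zθ)) := by
    intro a
    rw [hπθ a, hπbar a]
    congr 1
    rw [Real.log_div (by positivity) (by positivity),
      Real.log_div (Real.exp_ne_zero _) hZθpos.ne',
      Real.log_div (Real.exp_ne_zero _)
        (Finset.sum_pos (fun a _ => Real.exp_pos _) Finset.univ_nonempty).ne',
      Real.log_exp, Real.log_exp]
    have : (∑ a', Real.exp (Q a' / lam)) = Zb := rfl
    rw [this, hlogZb, hQdecomp a]
    ring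
  rw [Finset.sum_congr rfl (fun a _ => hterm a)]
  have hsum1 : ∑ a, Real.exp (θ a) / Zθ = 1 := by
    rw [← Finset.sum_div, ← hZθ, div_self hZθpos.ne']
  have hexpand : ∑ a, (Real.exp (θ a) / Zθ) * (-x a + (Real.log W - Real.log Zθ))
      = Real.log W - Real.log Zθ - (∑ a, x a * Real.exp (θ a)) / Zθ := by
    have : ∀ a, (Real.exp (θ a) / Zθ) * (-x a + (Real.log W - Real.log Zθ))
        = (Real.log W - Real.log Zθ) * (Real.exp (θ a) / Zθ) - (x a * Real.exp (θ a)) / Zθ := by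
      intro a; ring
    rw [Finset.sum_congr rfl (fun a _ => this a), Finset.sum_sub_distrib,
      ← Finset.mul_sum, hsum1, ← Finset.sum_div, mul_one]
  rw [hexpand]
  have hkey := softmax_key θ x (m / lam) hM
  have heq : (m / lam) ^ 2 / 2 = (1 / (2 * lam ^ 2)) * m ^ 2 := by
    ring
  calc Real.log W - Real.log Zθ - (∑ a, x a * Real.exp (θ a)) / Zθ
      ≤ (m / lam) ^ 2 / 2 := hkey
    _ = (1 / (2 * lam ^ 2)) * m ^ 2 := heq
end
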